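/- Under the hypotheses that x is not ultimately periodic, the Rauzy graph G_n(x) is of ∞-shape with cycles U (essentially right-special, edge-length k) and V (edge-length ℓ), and p(m, x)/m ≤ 4/3 for all m > n: if both U V^b U and U V^{b'} U are factors of x for integers b, b' ≥ 1, then b = b'. -/

import Mathlib

open Filter

variable {A : Type*}

/-- The factor of the infinite word `x` of length `n` starting at position `j` (0-indexed). -/
def subwordAt (x : ℕ → A) (j n : ℕ) : List A := (List.range n).map fun i => x (j + i)

/-- `w` is a factor (subword) of the infinite word `x`. -/
def IsFactor (w : List A) (x : ℕ → A) : Prop := ∃ j, subwordAt x j w.length = w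

/-- The subword complexity `p(n, x)`: the number of distinct length-`n` factors of `x`. -/
noncomputable def complexity (x : ℕ → A) (n : ℕ) : ℕ :=
  Set.ncard {w : List A | w.length = n ∧ IsFactor w x}

/-- `x` is ultimately periodic. -/
def UltimatelyPeriodic (x : ℕ → A) : Prop := ∃ N T, 0 < T ∧ ∀ i ≥ N, x (i + T) = x i

/-- `w` is a left-special factor of `x`. -/
def LeftSpecial (w : List A) (x : ℕ → A) : Prop :=
  ∃ a b : A, a ≠ b ∧ IsFactor (a :: w) x ∧ IsFactor (b :: w) x

/-- `w` is a right-special factor of `x`. -/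
def RightSpecial (w : List A) (x : ℕ → A) : Prop :=
  ∃ a b : A, a ≠ b ∧ IsFactor (w ++ [a]) x ∧ IsFactor (w ++ [b]) x

/-- `w` occurs infinitely many times in `x`. -/
def OccursInfinitely (w : List A) (x : ℕ → A) : Prop :=
  {j : ℕ | subwordAt x j w.length = w}.Infinite

/-- `x` is `n`-recurrent: every length-`n` factor occurs infinitely often. -/
def NRecurrent (n : ℕ) (x : ℕ → A) : Prop :=
  ∀ j : ℕ, {i : ℕ | subwordAt x i n = subwordAt x j n}.Infinite

/-- The shift of `x` by `s` places. -/
def shiftWord (x : ℕ → A) (s : ℕ) : ℕ → A := fun i => x (s + i)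

/-- `s_m`: the length of the `m`-th non-recurrent prefix of `x`. -/
noncomputable def srec (x : ℕ → A) (m : ℕ) : ℕ := sInf {s : ℕ | NRecurrent m (shiftWord x s)}

/-- `z_m`: the maximal `m`-recurrent tail of `x`, so that `x = a_m z_m`. -/
noncomputable def ztail (x : ℕ → A) (m : ℕ) : ℕ → A := shiftWord x (srec x m)

/-- The repetition function `r(n, x)`: the least `m ≥ 1` such that
`x_{m+1} … x_{m+n} = x_{i+1} … x_{i+n}` for some `0 ≤ i < m`. -/
noncomputable def repFn (x : ℕ → A) (n : ℕ) : ℕ :=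
  sInf {m : ℕ | 0 < m ∧ ∃ i < m, subwordAt x m n = subwordAt x i n}

/-- A right-special factor `w` is essential if it is a suffix of right-special
factors of every length `m ≥ |w|`. -/
def EssentialRightSpecial (w : List A) (x : ℕ → A) : Prop :=
  RightSpecial w x ∧
    ∀ m, w.length ≤ m → ∃ W : List A, W.length = m ∧ RightSpecial W x ∧ W.drop (m - w.length) = w

/-- `C` is (the word read along) a cycle at `w` in the Rauzy graph `𝒢_n(y)`:
it has length `> n`, prefix `w`, suffix `w`, and is a factor of `y`. -/
def IsCycleAt (y : ℕ → A) (n : ℕ) (w C : List A) : Prop :=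
  n < C.length ∧ C.take n = w ∧ C.drop (C.length - n) = w ∧ IsFactor C y

/-- The Rauzy graph `𝒢_n(y)` is of `∞`-shape with bi-special vertex `w`
and the two (simple) cycles `U` and `V`. -/
def InftyShape (y : ℕ → A) (n : ℕ) (w U V : List A) : Prop :=
  w.length = n ∧ LeftSpecial w y ∧ RightSpecial w y ∧
  (∀ v : List A, v.length = n → IsFactor v y → (LeftSpecial v y ∨ RightSpecial v y) → v = w) ∧
  IsCycleAt y n w U ∧ IsCycleAt y n w V ∧ U ≠ V ∧
  (∀ j, 0 < j → j < U.length - n → (U.drop j).take n ≠ w) ∧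
  (∀ j, 0 < j → j < V.length - n → (V.drop j).take n ≠ w) ∧
  (∀ v : List A, v.length = n → IsFactor v y →
    (∃ j ≤ U.length - n, (U.drop j).take n = v) ∨ (∃ j ≤ V.length - n, (V.drop j).take n = v))

/-- The word read along the concatenated path `U V^b U`, where `U`, `V` are
cycles at a vertex of length `n` (gluing overlaps of length `n`). -/
def cyclePow (n : ℕ) (U V : List A) (b : ℕ) : List A :=
  U ++ (List.replicate b (V.drop n)).flatten ++ U.drop n

/-- The irrationality exponent of a real number, valued in `ℝ≥0∞`. -/
noncomputable def irrationalityExponent (ξ : ℝ) : ENNReal :=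
  ⨆ (μ : ℝ) (_ : {q : ℕ | 0 < q ∧ ∃ p : ℤ, |ξ - p / q| < 1 / (q : ℝ) ^ μ}.Infinite),
    ENNReal.ofReal μ

/-!
Suppose `b < b'` and put `Q = U V^b`. Inside `U V^b U` and `U V^{b'} U` the word `Q` is followed
by `U` and by `V`, which leave `w` along different edges (`w` is the only right-special vertex),
so `Q` is right-special. As `U` is essential, some right-special `W` of length `|Q|` ends in `U`.
For `n < m ≤ |Q|` the suffixes of length `m` of `Q` and `W` are right-special and distinct, since
`Q` ends in `V` and `U`, `V` enter `w` along different edges (`w` is the only left-special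
vertex). Hence `p(m + 1) - p(m) ≥ 2` for `n < m ≤ |Q|` and `≥ 1` for `m ≤ n`, which together with
`p(n) ≤ k + ℓ + 2` (every vertex lies on `U` or `V`) contradicts `3 p(|Q| + 1) ≤ 4 (|Q| + 1)`.
-/

theorem subwordAt_length (x : ℕ → A) (j n : ℕ) : (subwordAt x j n).length = n := by
  simp [subwordAt]

theorem subwordAt_take (x : ℕ → A) (j n m : ℕ) :
    (subwordAt x j n).take m = subwordAt x j (min m n) := by
  simp [subwordAt, ← List.map_take, List.take_range]

theorem subwordAt_drop (x : ℕ → A) (j n d : ℕ) :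
    (subwordAt x j n).drop d = subwordAt x (j + d) (n - d) := by
  apply List.ext_getElem (by simp [subwordAt_length])
  intro i _ _
  simp [subwordAt, Nat.add_assoc]

section Words

variable {x : ℕ → A}

theorem IsFactor.take {w : List A} (h : IsFactor w x) (m : ℕ) : IsFactor (w.take m) x := by
  obtain ⟨j, hj⟩ := h
  exact ⟨j, by rw [List.length_take, ← hj, subwordAt_take, subwordAt_length, min_comm]⟩

theorem IsFactor.drop {w : List A} (h : IsFactor w x) (d : ℕ) : IsFactor (w.drop d) x := by
  obtain ⟨j, hj⟩ := h
  exact ⟨j + d, by rw [List.length_drop, ← hj, subwordAt_drop, subwordAt_length]⟩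

theorem IsFactor.of_infix {u v : List A} (huv : u <:+: v) (hv : IsFactor v x) : IsFactor u x := by
  obtain ⟨t, hut, htv⟩ := List.infix_iff_prefix_suffix.1 huv
  rw [List.prefix_iff_eq_take.1 hut, List.suffix_iff_eq_drop.1 htv]
  exact (hv.drop _).take _

theorem RightSpecial.isFactor {w : List A} (h : RightSpecial w x) : IsFactor w x := by
  obtain ⟨a, -, -, ha, -⟩ := h
  exact ha.of_infix (List.prefix_append w [a]).isInfix

theorem RightSpecial.of_suffix {u w : List A} (huw : u <:+ w) (h : RightSpecial w x) :
    RightSpecial u x := by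
  obtain ⟨a, c, hac, ha, hc⟩ := h
  exact ⟨a, c, hac, ha.of_infix (List.suffix_append_self_iff.2 huw).isInfix,
    hc.of_infix (List.suffix_append_self_iff.2 huw).isInfix⟩

theorem rightSpecial_of_isFactor_append_cons {Q s t : List A} {a c : A} (hac : a ≠ c)
    (ha : IsFactor (Q ++ a :: s) x) (hc : IsFactor (Q ++ c :: t) x) : RightSpecial Q x :=
  ⟨a, c, hac, ha.of_infix (List.IsPrefix.isInfix ⟨s, by simp⟩),
    hc.of_infix (List.IsPrefix.isInfix ⟨t, by simp⟩)⟩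

end Words

theorem complexity_zero (x : ℕ → A) : complexity x 0 = 1 := by
  have : {w : List A | w.length = 0 ∧ IsFactor w x} = {[]} :=
    Set.ext fun _ => ⟨fun h => List.length_eq_zero_iff.1 h.1, by rintro rfl; exact ⟨rfl, 0, rfl⟩⟩
  rw [complexity, this, Set.ncard_singleton]

section Complexity

variable [Finite A] (x : ℕ → A)

theorem finite_setOf_length_eq_and (m : ℕ) (P : List A → Prop) :
    {w : List A | w.length = m ∧ P w}.Finite :=
  (List.finite_length_eq A m).subset fun _ hw => hw.1

/-- Each factor of length `m` has an extension of length `m + 1`, and each right-special one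
has at least two. -/
theorem complexity_add_ncard_rightSpecial_le (m : ℕ) :
    complexity x m + {v : List A | v.length = m ∧ RightSpecial v x}.ncard ≤
      complexity x (m + 1) := by
  set F : ℕ → Set (List A) := fun m => {w | w.length = m ∧ IsFactor w x}
  have hext : ∀ v ∈ F m, ∃ e ∈ F (m + 1), e.take m = v := by
    rintro v ⟨hv, j, hj⟩
    refine ⟨subwordAt x j (m + 1), ⟨subwordAt_length .., j, by rw [subwordAt_length]⟩, ?_⟩
    rw [subwordAt_take, min_eq_left m.le_succ, ← hv, hj]
  choose! g hgF hgv using hext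
  replace hgF : Set.MapsTo g (F m) (F (m + 1)) := fun v hv => hgF v hv
  have hg : Set.InjOn g (F m) := fun u hu v hv huv => by rw [← hgv u hu, ← hgv v hv, huv]
  have hsub : {v : List A | v.length = m ∧ RightSpecial v x} ⊆
      (·.take m) '' (F (m + 1) \ g '' F m) := by
    rintro v ⟨hv, a, c, hac, ha, hc⟩
    have hvF : v ∈ F m := ⟨hv, RightSpecial.isFactor ⟨a, c, hac, ha, hc⟩⟩
    have hnew : ∀ e ∈ F (m + 1), e.take m = v → e ≠ g v → e ∈ F (m + 1) \ g '' F m :=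
      fun e he hev hne => ⟨he, fun ⟨u, hu, hue⟩ => hne (by rw [← hue, ← hev, ← hue, hgv u hu])⟩
    have hta : (v ++ [a]).take m = v := by simp [← hv]
    have htc : (v ++ [c]).take m = v := by simp [← hv]
    by_cases hga : v ++ [a] = g v
    · refine ⟨v ++ [c], hnew _ ⟨by simp [hv], hc⟩ htc fun h => hac ?_, htc⟩
      simpa using hga.trans h.symm
    · exact ⟨v ++ [a], hnew _ ⟨by simp [hv], ha⟩ hta hga, hta⟩
  have hF : ∀ m, (F m).Finite := fun m => finite_setOf_length_eq_and m _
  calc complexity x m + {v : List A | v.length = m ∧ RightSpecial v x}.ncard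
      ≤ (g '' F m).ncard + (F (m + 1) \ g '' F m).ncard := by
        rw [hg.ncard_image]
        exact Nat.add_le_add_left ((Set.ncard_le_ncard hsub ((hF _).sdiff.image _)).trans
          (Set.ncard_image_le (hF _).sdiff)) _
    _ = complexity x (m + 1) := by
        rw [add_comm, Set.ncard_sdiff_add_ncard_of_subset hgF.image_subset (hF _)]
        rfl

theorem complexity_add_mul_le {c m N : ℕ}
    (h : ∀ t, m ≤ t → t < m + N → c ≤ {v : List A | v.length = t ∧ RightSpecial v x}.ncard) :
    complexity x m + c * N ≤ complexity x (m + N) := by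
  induction N with
  | zero => simp
  | succ N ih =>
    have hstep := complexity_add_ncard_rightSpecial_le x (m + N)
    have hN := h (m + N) (by omega) (by omega)
    have := ih fun t ht htN => h t ht (by omega)
    rw [← add_assoc, Nat.mul_succ]
    omega

theorem add_one_le_complexity_of_rightSpecial {Q : List A} (hQ : RightSpecial Q x) {m : ℕ}
    (hm : m ≤ Q.length + 1) : m + 1 ≤ complexity x m := by
  have := complexity_add_mul_le (c := 1) (m := 0) (N := m) x fun t _ ht => by
    rw [Nat.one_le_iff_ne_zero, ← Nat.pos_iff_ne_zero, Set.ncard_pos (finite_setOf_length_eq_and ..)]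
    exact ⟨Q.rtake t, by simp [List.rtake]; omega, hQ.of_suffix (List.drop_suffix _ _)⟩
  rw [complexity_zero, zero_add] at this
  omega

theorem complexity_add_two_mul_le {Q W : List A} (hQ : RightSpecial Q x) (hW : RightSpecial W x)
    (hQW : Q.length ≤ W.length) {n : ℕ} (hn : n ≤ Q.length)
    (hne : ∀ m, n < m → m ≤ Q.length → Q.rtake m ≠ W.rtake m) :
    complexity x (n + 1) + 2 * (Q.length - n) ≤ complexity x (Q.length + 1) := by
  have := complexity_add_mul_le (c := 2) (m := n + 1) (N := Q.length - n) x fun t ht htQ => by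
    rw [← Set.ncard_pair (hne t (by omega) (by omega))]
    refine Set.ncard_le_ncard ?_ (finite_setOf_length_eq_and ..)
    rintro v (rfl | rfl)
    · exact ⟨by simp [List.rtake]; omega, hQ.of_suffix (List.drop_suffix _ _)⟩
    · exact ⟨by simp [List.rtake]; omega, hW.of_suffix (List.drop_suffix _ _)⟩
  rwa [show n + 1 + (Q.length - n) = Q.length + 1 by omega] at this

end Complexity

/-- The word read along a simple cycle through the vertex `w` of the Rauzy graph `G_n`. -/
def IsCompleteReturnWord (n : ℕ) (w U : List A) : Prop :=
  n < U.length ∧ U.take n = w ∧ U.drop (U.length - n) = w ∧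
    ∀ j, 0 < j → j < U.length - n → (U.drop j).take n ≠ w

namespace IsCompleteReturnWord

variable {n : ℕ} {w U V : List A}

theorem reverse (hU : IsCompleteReturnWord n w U) :
    IsCompleteReturnWord n w.reverse U.reverse := by
  obtain ⟨hn, htake, hdrop, hsimple⟩ := hU
  refine ⟨by simpa using hn, by rw [List.take_reverse, hdrop], ?_, fun j hj hjU => ?_⟩
  · rw [List.length_reverse, List.drop_reverse, show U.length - (U.length - n) = n by omega, htake]
  · rw [List.length_reverse] at hjU
    rw [List.drop_reverse, List.take_reverse, List.length_take,
      min_eq_left (by omega : U.length - j ≤ U.length), List.drop_take,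
      show U.length - j - (U.length - j - n) = n by omega, Ne, List.reverse_inj]
    exact hsimple _ (by omega) (by omega)

theorem eq_of_prefix (hU : IsCompleteReturnWord n w U) (hV : IsCompleteReturnWord n w V)
    (hUV : U <+: V) : U = V := by
  by_contra hne
  have := hU.1
  have hlt : U.length < V.length :=
    lt_of_le_of_ne hUV.length_le fun h => hne (hUV.eq_of_length h)
  apply hV.2.2.2 (U.length - n) (by omega) (by omega)
  rw [List.take_drop, show U.length - n + n = U.length by omega, ← List.prefix_iff_eq_take.1 hUV,
    hU.2.2.1]

variable {L : Set (List A)} (hL : ∀ ⦃u v⦄, u <:+: v → v ∈ L → u ∈ L)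
  (hw : ∀ v a c, v.length = n → a ≠ c → v ++ [a] ∈ L → v ++ [c] ∈ L → v = w)
include hL hw

/-- Away from `w` there is no branching, so two paths that agree up to a vertex other than `w`
agree on the next letter. -/
theorem take_succ_eq (hU : IsCompleteReturnWord n w U) (hUL : U ∈ L) (hVL : V ∈ L) {m : ℕ}
    (hnm : n < m) (hmU : m < U.length) (hmV : m < V.length) (h : U.take m = V.take m) :
    U.take (m + 1) = V.take (m + 1) := by
  rw [List.take_succ_eq_append_getElem hmU, List.take_succ_eq_append_getElem hmV, h]
  by_contra hne
  have hext : ∀ Z : List A, (hmZ : m < Z.length) → Z ∈ L →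
      (Z.take m).drop (m - n) ++ [Z[m]] ∈ L := fun Z hmZ hZL => by
    rw [← List.drop_append_of_le_length (by simp; omega), ← List.take_succ_eq_append_getElem]
    exact hL ((List.drop_suffix _ _).isInfix.trans (List.take_prefix _ _).isInfix) hZL
  have hwin := hw _ _ _ (by simp; omega) (fun he => hne (by rw [he])) (h ▸ hext U hmU hUL)
    (hext V hmV hVL)
  apply hU.2.2.2 (m - n) (by omega) (by omega)
  rw [← hwin, ← h, List.drop_take, show m - (m - n) = n by omega]

theorem take_succ_ne (hU : IsCompleteReturnWord n w U) (hV : IsCompleteReturnWord n w V)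
    (hUL : U ∈ L) (hVL : V ∈ L) (hUV : U ≠ V) : U.take (n + 1) ≠ V.take (n + 1) := by
  intro h
  have hagree : ∀ m, n + 1 ≤ m → m ≤ min U.length V.length → U.take m = V.take m := by
    refine Nat.le_induction (fun _ => h) fun m hm ih hle => ?_
    exact hU.take_succ_eq hL hw hUL hVL (by omega) (by omega) (by omega) (ih (by omega))
  have hmin := hagree _ (by have := hU.1; have := hV.1; omega) le_rfl
  rcases le_total U.length V.length with hle | hle
  · rw [min_eq_left hle, List.take_length] at hmin
    exact hUV (hU.eq_of_prefix hV (hmin ▸ List.take_prefix _ _))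
  · rw [min_eq_right hle, List.take_length] at hmin
    exact hUV (hV.eq_of_prefix hU (hmin ▸ List.take_prefix _ _)).symm

end IsCompleteReturnWord

theorem List.rtake_rtake_of_le {l : List A} {i j : ℕ} (hij : i ≤ j) :
    (l.rtake j).rtake i = l.rtake i := by
  simp only [List.rtake_eq_reverse_take_reverse, List.reverse_reverse, List.take_take,
    min_eq_left hij]

theorem List.IsSuffix.rtake_eq {s l : List A} (h : s <:+ l) {i : ℕ} (hi : i ≤ s.length) :
    s.rtake i = l.rtake i := by
  obtain ⟨t, rfl⟩ := h
  rw [List.rtake, List.rtake, List.length_append,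
    show t.length + s.length - i = t.length + (s.length - i) by omega, List.drop_append]
  simp

theorem append_suffix_append_flatten_replicate {w P D : List A} (hP : w <:+ P)
    (hD : w <:+ w ++ D) (c : ℕ) : w ++ D <:+ P ++ (List.replicate (c + 1) D).flatten := by
  induction c with
  | zero => simpa using List.suffix_append_self_iff.2 hP
  | succ c ih =>
    rw [List.replicate_succ', List.flatten_append, List.flatten_singleton, ← List.append_assoc]
    exact List.suffix_append_self_iff.2 (hD.trans ih)

namespace InftyShape

variable {x : ℕ → A} {n b b' : ℕ} {w U V : List A}

theorem isCompleteReturnWord_left (h : InftyShape x n w U V) : IsCompleteReturnWord n w U := by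
  obtain ⟨-, -, -, -, ⟨hn, htake, hdrop, -⟩, -, -, hsimple, -⟩ := h
  exact ⟨hn, htake, hdrop, hsimple⟩

theorem isCompleteReturnWord_right (h : InftyShape x n w U V) : IsCompleteReturnWord n w V := by
  obtain ⟨-, -, -, -, -, ⟨hn, htake, hdrop, -⟩, -, -, hsimple, -⟩ := h
  exact ⟨hn, htake, hdrop, hsimple⟩

/-- The two cycles leave `w` along different edges, since `w` is the only right-special vertex. -/
theorem take_succ_ne (h : InftyShape x n w U V) : U.take (n + 1) ≠ V.take (n + 1) := by
  have hU := h.isCompleteReturnWord_left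
  have hV := h.isCompleteReturnWord_right
  obtain ⟨-, -, -, huniq, ⟨-, -, -, hUx⟩, ⟨-, -, -, hVx⟩, hUV, -⟩ := h
  refine hU.take_succ_ne (L := {u | IsFactor u x}) (fun _ _ huv hv => IsFactor.of_infix huv hv)
    (fun v a c hv hac ha hc => ?_) hV hUx hVx hUV
  exact huniq v hv (RightSpecial.isFactor ⟨a, c, hac, ha, hc⟩) (Or.inr ⟨a, c, hac, ha, hc⟩)

/-- The two cycles enter `w` along different edges, since `w` is the only left-special vertex. -/
theorem rtake_succ_ne (h : InftyShape x n w U V) : U.rtake (n + 1) ≠ V.rtake (n + 1) := by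
  have hU := h.isCompleteReturnWord_left
  have hV := h.isCompleteReturnWord_right
  obtain ⟨-, -, -, huniq, ⟨-, -, -, hUx⟩, ⟨-, -, -, hVx⟩, hUV, -⟩ := h
  have hrev := hU.reverse.take_succ_ne (L := {u | IsFactor u.reverse x})
    (fun _ _ huv hv => IsFactor.of_infix huv.reverse hv) (fun v a c hv hac ha hc => ?_)
    hV.reverse (by simpa using hUx) (by simpa using hVx)
    (fun he => hUV (List.reverse_injective he))
  · rwa [List.rtake_eq_reverse_take_reverse, List.rtake_eq_reverse_take_reverse, Ne,
      List.reverse_inj]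
  · simp only [Set.mem_ofPred_eq, List.reverse_append, List.reverse_singleton,
      List.singleton_append] at ha hc
    rw [← List.reverse_reverse v, huniq v.reverse (by simpa using hv)
      (ha.of_infix (List.suffix_cons a _).isInfix) (Or.inl ⟨a, c, hac, ha, hc⟩)]

theorem complexity_le (h : InftyShape x n w U V) :
    complexity x n ≤ (U.length - n + 1) + (V.length - n + 1) := by
  classical
  obtain ⟨-, -, -, -, -, -, -, -, -, hcover⟩ := h
  set S := (Finset.range (U.length - n + 1)).image (fun j => (U.drop j).take n) ∪
    (Finset.range (V.length - n + 1)).image (fun j => (V.drop j).take n)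
  have hsub : {v : List A | v.length = n ∧ IsFactor v x} ⊆ S := by
    rintro v ⟨hv, hvx⟩
    rcases hcover v hv hvx with ⟨j, hj, rfl⟩ | ⟨j, hj, rfl⟩
    · exact Finset.mem_union_left _ (Finset.mem_image_of_mem _ (Finset.mem_range.2 (by omega)))
    · exact Finset.mem_union_right _ (Finset.mem_image_of_mem _ (Finset.mem_range.2 (by omega)))
  calc complexity x n ≤ S.card :=
        (Set.ncard_le_ncard hsub (Finset.finite_toSet S)).trans_eq (Set.ncard_coe_finset S)
    _ ≤ (U.length - n + 1) + (V.length - n + 1) :=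
        (Finset.card_union_le _ _).trans (add_le_add (Finset.card_image_le.trans_eq
          (Finset.card_range _)) (Finset.card_image_le.trans_eq (Finset.card_range _)))

theorem rightSpecial_append_flatten_replicate (h : InftyShape x n w U V) (hbb' : b < b')
    (hfac : IsFactor (cyclePow n U V b) x) (hfac' : IsFactor (cyclePow n U V b') x) :
    RightSpecial (U ++ (List.replicate b (V.drop n)).flatten) x := by
  have hUn := h.isCompleteReturnWord_left.1
  have hVn := h.isCompleteReturnWord_right.1
  have hne : U[n] ≠ V[n] := fun he => h.take_succ_ne (by
    rw [List.take_succ_eq_append_getElem hUn, List.take_succ_eq_append_getElem hVn, he,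
      h.isCompleteReturnWord_left.2.1, h.isCompleteReturnWord_right.2.1])
  refine rightSpecial_of_isFactor_append_cons hne (s := U.drop (n + 1)) (t := V.drop (n + 1))
    (by rwa [← List.drop_eq_getElem_cons hUn]) (hfac'.of_infix (List.IsPrefix.isInfix ?_))
  obtain ⟨c, rfl⟩ := Nat.exists_eq_add_of_lt hbb'
  refine ⟨(List.replicate c (V.drop n)).flatten ++ U.drop n, ?_⟩
  rw [← List.drop_eq_getElem_cons hVn, cyclePow, show b + c + 1 = b + (1 + c) by omega,
    List.replicate_add, List.replicate_add]
  simp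

theorem rtake_append_flatten_replicate_ne (h : InftyShape x n w U V) (hb : 1 ≤ b) {W : List A} (hUW : U <:+ W)
    {m : ℕ} (hnm : n < m) :
    (U ++ (List.replicate b (V.drop n)).flatten).rtake m ≠ W.rtake m := by
  have hU := h.isCompleteReturnWord_left
  have hV := h.isCompleteReturnWord_right
  have hVQ : V <:+ U ++ (List.replicate b (V.drop n)).flatten := by
    obtain ⟨c, rfl⟩ := Nat.exists_eq_add_of_le' hb
    have hwV : w ++ V.drop n = V := by rw [← hV.2.1, List.take_append_drop]
    have := append_suffix_append_flatten_replicate (hU.2.2.1 ▸ List.drop_suffix _ _)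
      (hwV ▸ hV.2.2.1 ▸ List.drop_suffix _ _) c
    rwa [hwV] at this
  intro heq
  apply h.rtake_succ_ne
  have := congrArg (·.rtake (n + 1)) heq
  simp only [List.rtake_rtake_of_le hnm] at this
  rw [← hVQ.rtake_eq (by have := hV.1; omega), ← hUW.rtake_eq (by have := hU.1; omega)] at this
  exact this.symm

end InftyShape

theorem InftyShape.not_lt_of_isFactor_cyclePow [Finite A] {x : ℕ → A} {n b b' : ℕ}
    {w U V : List A} (h : InftyShape x n w U V) (hEss : EssentialRightSpecial U x)
    (hcomp : ∀ m : ℕ, n < m → (complexity x m : ℝ) / (m : ℝ) ≤ 4 / 3) (hb : 1 ≤ b)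
    (hfac : IsFactor (cyclePow n U V b) x) (hfac' : IsFactor (cyclePow n U V b') x) :
    ¬ b < b' := by
  intro hbb'
  set Q := U ++ (List.replicate b (V.drop n)).flatten
  have hQ : RightSpecial Q x := h.rightSpecial_append_flatten_replicate hbb' hfac hfac'
  obtain ⟨W, hWlen, hW, hUW⟩ := hEss.2 Q.length (by simp [Q])
  have hQlen : Q.length = U.length + b * (V.length - n) := by simp [Q]
  have hUn := h.isCompleteReturnWord_left.1
  have hVn := h.isCompleteReturnWord_right.1
  have hpn : n + 1 ≤ complexity x n := add_one_le_complexity_of_rightSpecial x hQ (by omega)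
  have hpn1 : n + 2 ≤ complexity x (n + 1) :=
    add_one_le_complexity_of_rightSpecial x hQ (by omega)
  have hgrowth := complexity_add_two_mul_le x hQ hW hWlen.ge (by omega)
    fun m hnm _ => h.rtake_append_flatten_replicate_ne hb (hUW ▸ List.drop_suffix _ _) hnm
  have hcover := h.complexity_le
  have hdensity : 3 * complexity x (Q.length + 1) ≤ 4 * (Q.length + 1) := by
    have := hcomp (Q.length + 1) (by omega)
    rw [div_le_div_iff₀ (by positivity) (by norm_num)] at this
    have : ((3 * complexity x (Q.length + 1) : ℕ) : ℝ) ≤ ((4 * (Q.length + 1) : ℕ) : ℝ) := by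
      push_cast at this ⊢
      linarith
    exact_mod_cast this
  have : V.length - n ≤ b * (V.length - n) := Nat.le_mul_of_pos_left _ hb
  omega

theorem multiplicity_unique_general {A : Type*} [Fintype A] (x : ℕ → A)
    (n b b' : ℕ) (w U V : List A)
    (hshape : InftyShape x n w U V)
    (hEss : EssentialRightSpecial U x)
    (hcomp : ∀ m : ℕ, n < m → (complexity x m : ℝ) / (m : ℝ) ≤ 4 / 3)
    (hb : 1 ≤ b) (hb' : 1 ≤ b')
    (hfac : IsFactor (cyclePow n U V b) x) (hfac' : IsFactor (cyclePow n U V b') x) :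
    b = b' :=
  le_antisymm (not_lt.1 (hshape.not_lt_of_isFactor_cyclePow hEss hcomp hb' hfac' hfac))
    (not_lt.1 (hshape.not_lt_of_isFactor_cyclePow hEss hcomp hb hfac hfac'))

theorem multiplicity_unique {A : Type*} [Fintype A] (x : ℕ → A)
    (n k ℓ b b' : ℕ) (w U V : List A)
    (hx : ¬ UltimatelyPeriodic x)
    (hshape : InftyShape x n w U V)
    (hU : U.length = n + k) (hV : V.length = n + ℓ)
    (hEss : EssentialRightSpecial U x)
    (hcomp : ∀ m : ℕ, n < m → (complexity x m : ℝ) / (m : ℝ) ≤ 4 / 3)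
    (hb : 1 ≤ b) (hb' : 1 ≤ b')
    (hfac : IsFactor (cyclePow n U V b) x) (hfac' : IsFactor (cyclePow n U V b') x) :
    b = b' :=
  multiplicity_unique_general x n b b' w U V hshape hEss hcomp hb hb' hfac hfac'
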